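/- Let X and Y be d × d complex matrices with Y normal, and let p ≥ 1. Then ‖X*Y − Y*X‖₂ ≤ 2 * ‖X‖₂ * r(Y) ≤ ‖X‖₂ * (σ₁(Y) + σ₂(Y)) ≤ 2^(1 − 1/p) * ‖X‖₂ * ‖Y‖_p, where r(Y) is the radius of the spectrum of Y. -/

import Mathlib

open Matrix BigOperators Polynomial

/-- Frobenius norm of a complex matrix. -/
noncomputable def frobNorm {n : ℕ} (X : Matrix (Fin n) (Fin n) ℂ) : ℝ :=
  Real.sqrt (∑ i, ∑ j, ‖X i j‖ ^ 2)

/-- The entries of `v` sorted in non-increasing order: `sortedDesc v 0` is the largest, etc. -/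
noncomputable def sortedDesc {d : ℕ} (v : Fin d → ℝ) : Fin d → ℝ :=
  fun k => v (Tuple.sort v k.rev)

/-- The singular values of `X` in non-increasing order:
`singularValues X 0 = σ₁(X)`, `singularValues X 1 = σ₂(X)`, ... -/
noncomputable def singularValues {d : ℕ} (X : Matrix (Fin d) (Fin d) ℂ) : Fin d → ℝ :=
  sortedDesc fun i => Real.sqrt ((Matrix.isHermitian_conjTranspose_mul_self X).eigenvalues i)

/-- The Schatten `p`-norm of `X`. -/
noncomputable def schattenNorm {d : ℕ} (p : ℝ) (X : Matrix (Fin d) (Fin d) ℂ) : ℝ :=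
  (∑ i, singularValues X i ^ p) ^ (1 / p)

/-!
Write `Y = U diag(μ) Uᴴ` with `U` unitary. Then the `μ i` are the `λ i` up to order, and the
singular values of `Y` are the `|λ i|`. Conjugating by `U` turns the commutator into the Schur
product of `UᴴXU` with the matrix `(μ j - μ i)`, whose entries are at most `2 r(Y)`. Centring at
`(σ₁ - σ₂)/(2σ₁) · λₐ`, where `|λₐ| = σ₁`, puts every eigenvalue within `(σ₁ + σ₂)/2`; the last
inequality is the power mean inequality for `σ₁, σ₂`.
-/

open Module.End in
theorem LinearMap.IsSymmetric.exists_orthonormalBasis_apply_eq_smul_of_commute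
    {𝕜 E ι : Type*} [RCLike 𝕜] [NormedAddCommGroup E] [InnerProductSpace 𝕜 E]
    [FiniteDimensional 𝕜 E] [Fintype ι] {A B : E →ₗ[𝕜] E} (hA : A.IsSymmetric)
    (hB : B.IsSymmetric) (hAB : Commute A B) (hι : Module.finrank 𝕜 E = Fintype.card ι) :
    ∃ (b : OrthonormalBasis ι 𝕜 E) (α β : ι → 𝕜),
      ∀ j, A (b j) = α j • b j ∧ B (b j) = β j • b j := by
  classical
  let V : 𝕜 × 𝕜 → Submodule 𝕜 E := fun i => eigenspace A i.2 ⊓ eigenspace B i.1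
  obtain ⟨hindep, hsup⟩ := (DirectSum.isInternal_submodule_iff_iSupIndep_and_iSup_eq_top V).mp
    (hA.directSum_isInternal_of_commute hB hAB)
  -- `subordinateOrthonormalBasis` needs a finite family: keep the nonzero joint eigenspaces
  have : Fintype {i // V i ≠ ⊥} := hindep.fintypeNeBotOfFiniteDimensional
  let W : {i // V i ≠ ⊥} → Submodule 𝕜 E := fun i => V i
  have hW : DirectSum.IsInternal W := by
    refine (DirectSum.isInternal_submodule_iff_iSupIndep_and_iSup_eq_top W).mpr
      ⟨hindep.comp Subtype.val_injective, top_le_iff.mp (hsup ▸ iSup_le fun i => ?_)⟩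
    by_cases h : V i = ⊥
    · simp [h]
    · exact le_iSup W ⟨i, h⟩
  have hW' := (hA.orthogonalFamily_eigenspace_inf_eigenspace hB).comp
    (Subtype.val_injective (p := fun i => V i ≠ ⊥))
  let e := (Fintype.equivFin ι).symm
  let idx := fun j => (hW.subordinateOrthonormalBasisIndex hι (e.symm j) hW').1
  refine ⟨(hW.subordinateOrthonormalBasis hι hW').reindex e, fun j => (idx j).2,
    fun j => (idx j).1, fun j => ?_⟩
  obtain ⟨hjA, hjB⟩ := hW.subordinateOrthonormalBasis_subordinate hι (e.symm j) hW'
  rw [OrthonormalBasis.reindex_apply]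
  exact ⟨mem_eigenspace_iff.mp hjA, mem_eigenspace_iff.mp hjB⟩

namespace Matrix

theorem exists_unitary_eq_mul_diagonal_mul_star_of_orthonormalBasis {𝕜 n : Type*} [RCLike 𝕜]
    [Fintype n] [DecidableEq n] {Y : Matrix n n 𝕜} (b : OrthonormalBasis n 𝕜 (EuclideanSpace 𝕜 n))
    (μ : n → 𝕜) (hb : ∀ j, Y *ᵥ b j = μ j • ⇑(b j)) :
    ∃ U ∈ unitaryGroup n 𝕜, Y = U * diagonal μ * star U := by
  let U := (EuclideanSpace.basisFun n 𝕜).toBasis.toMatrix b.toBasis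
  have hU : U ∈ unitaryGroup n 𝕜 :=
    (EuclideanSpace.basisFun n 𝕜).toMatrix_orthonormalBasis_mem_unitary b
  have hUij : ∀ i j, U i j = b j i := fun _ _ => rfl
  have hYU : Y * U = U * diagonal μ := by
    ext i j
    rw [mul_diagonal, mul_apply, hUij, mul_comm]
    simpa [hUij, mulVec, dotProduct] using congrFun (hb j) i
  refine ⟨U, hU, ?_⟩
  rw [← hYU, Matrix.mul_assoc, mem_unitaryGroup_iff.mp hU, Matrix.mul_one]

theorem exists_unitary_eq_mul_diagonal_mul_star_of_isStarNormal {n : Type*} [Fintype n]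
    [DecidableEq n] {Y : Matrix n n ℂ} (hY : IsStarNormal Y) :
    ∃ μ : n → ℂ, ∃ U ∈ unitaryGroup n ℂ, Y = U * diagonal μ * star U := by
  -- `2Y = A + iB` with `A`, `B` Hermitian, and they commute because `Y` is normal
  let A := Y + Yᴴ
  let B := Complex.I • (Yᴴ - Y)
  have hA : A.IsHermitian := by simp [A, IsHermitian, add_comm]
  have hB : B.IsHermitian := by
    simp only [B, IsHermitian, conjTranspose_smul, conjTranspose_sub,
      conjTranspose_conjTranspose, Complex.star_def, Complex.conj_I, neg_smul, smul_sub]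
    abel
  have hAB : Commute A B := by
    have := hY.star_comm_self
    simp only [Commute, SemiconjBy, star_eq_conjTranspose] at this
    simp only [Commute, SemiconjBy, A, B, Matrix.mul_smul, Matrix.smul_mul, Matrix.mul_sub,
      Matrix.sub_mul, Matrix.add_mul, Matrix.mul_add, this]
    module
  have hYAB : Y = (1 / 2 : ℂ) • (A + Complex.I • B) := by
    simp only [A, B, smul_smul, Complex.I_mul_I]
    module
  have hAB' : Commute (toEuclideanLin A) (toEuclideanLin B) := by
    simp only [Commute, SemiconjBy, Module.End.mul_eq_comp, ← toLpLin_mul_same, hAB.eq]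
  obtain ⟨b, α, β, hb⟩ := LinearMap.IsSymmetric.exists_orthonormalBasis_apply_eq_smul_of_commute
    (isSymmetric_toEuclideanLin_iff.mpr hA) (isSymmetric_toEuclideanLin_iff.mpr hB) hAB'
    finrank_euclideanSpace
  refine ⟨fun j => (α j + Complex.I * β j) / 2,
    exists_unitary_eq_mul_diagonal_mul_star_of_orthonormalBasis b _ fun j => ?_⟩
  have hαj : A *ᵥ b j = α j • ⇑(b j) := congrArg WithLp.ofLp (hb j).1
  have hβj : B *ᵥ b j = β j • ⇑(b j) := congrArg WithLp.ofLp (hb j).2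
  rw [hYAB, smul_mulVec, add_mulVec, smul_mulVec, hαj, hβj, smul_smul, ← add_smul, smul_smul]
  congr 1
  ring

theorem charpoly_unitary_conj {R n : Type*} [CommRing R] [StarRing R] [Fintype n]
    [DecidableEq n] {U : Matrix n n R} (hU : U ∈ unitaryGroup n R) (M : Matrix n n R) :
    (U * M * star U).charpoly = M.charpoly := by
  rw [charpoly_mul_comm, ← Matrix.mul_assoc, mem_unitaryGroup_iff'.mp hU, Matrix.one_mul]

end Matrix

theorem Polynomial.map_univ_eq_of_prod_X_sub_C_eq {R ι : Type*} [CommRing R] [IsDomain R]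
    [Fintype ι] {v w : ι → R} (h : ∏ i, (X - C (v i)) = ∏ i, (X - C (w i))) :
    Finset.univ.val.map v = Finset.univ.val.map w := by
  have hroots : ∀ u : ι → R, (∏ i, (X - C (u i))).roots = Finset.univ.val.map u := fun u => by
    rw [roots_prod _ _ (Finset.prod_ne_zero_iff.mpr fun i _ => X_sub_C_ne_zero (u i))]
    simp
  rw [← hroots, h, hroots]

theorem frobNorm_eq_sqrt_re_trace {n : ℕ} (M : Matrix (Fin n) (Fin n) ℂ) :
    frobNorm M = √(trace (Mᴴ * M)).re := by
  rw [frobNorm, Finset.sum_comm]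
  simp [trace, mul_apply, Complex.re_sum, ← Complex.normSq_eq_norm_sq, Complex.normSq_apply,
    mul_comm]

theorem frobNorm_unitary_conj {n : ℕ} {U : Matrix (Fin n) (Fin n) ℂ}
    (hU : U ∈ unitaryGroup (Fin n) ℂ) (M : Matrix (Fin n) (Fin n) ℂ) :
    frobNorm (U * M * star U) = frobNorm M := by
  have hUU : Uᴴ * U = 1 := by rw [← star_eq_conjTranspose]; exact mem_unitaryGroup_iff'.mp hU
  rw [frobNorm_eq_sqrt_re_trace, frobNorm_eq_sqrt_re_trace, star_eq_conjTranspose,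
    conjTranspose_mul, conjTranspose_mul, conjTranspose_conjTranspose]
  congr 2
  simp only [Matrix.mul_assoc]
  rw [← Matrix.mul_assoc Uᴴ U, hUU, Matrix.one_mul, trace_mul_comm]
  simp only [Matrix.mul_assoc, hUU, Matrix.mul_one]

theorem frobNorm_mul_diagonal_sub_diagonal_mul_le {n : ℕ} (Z : Matrix (Fin n) (Fin n) ℂ)
    (μ : Fin n → ℂ) {R : ℝ} (hR : 0 ≤ R) (hμ : ∀ i j, ‖μ i - μ j‖ ≤ R) :
    frobNorm (Z * diagonal μ - diagonal μ * Z) ≤ R * frobNorm Z := by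
  rw [frobNorm, frobNorm, ← Real.sqrt_sq hR, ← Real.sqrt_mul (sq_nonneg R), Finset.mul_sum]
  refine Real.sqrt_le_sqrt (Finset.sum_le_sum fun i _ => ?_)
  rw [Finset.mul_sum]
  refine Finset.sum_le_sum fun j _ => ?_
  have hij : (Z * diagonal μ - diagonal μ * Z) i j = Z i j * (μ j - μ i) := by
    simp only [Matrix.sub_apply, mul_diagonal, diagonal_mul]
    ring
  rw [hij, norm_mul, mul_pow, mul_comm]
  gcongr
  rw [norm_sub_rev]
  exact hμ i j

theorem frobNorm_commutator_unitary_conj_diagonal_le {n : ℕ} (X : Matrix (Fin n) (Fin n) ℂ)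
    {U : Matrix (Fin n) (Fin n) ℂ} (hU : U ∈ unitaryGroup (Fin n) ℂ)
    (μ : Fin n → ℂ) {R : ℝ} (hR : 0 ≤ R) (hμ : ∀ i j, ‖μ i - μ j‖ ≤ R) :
    frobNorm (X * (U * diagonal μ * star U) - U * diagonal μ * star U * X) ≤ R * frobNorm X := by
  have hUU : star U * U = 1 := mem_unitaryGroup_iff'.mp hU
  set Z := star U * X * U
  have hX : X = U * Z * star U := by
    simp only [Z, ← Matrix.mul_assoc, mem_unitaryGroup_iff.mp hU, Matrix.one_mul]
    rw [Matrix.mul_assoc, mem_unitaryGroup_iff.mp hU, Matrix.mul_one]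
  have hcomm : X * (U * diagonal μ * star U) - U * diagonal μ * star U * X
      = U * (Z * diagonal μ - diagonal μ * Z) * star U := by
    rw [hX]
    simp only [Matrix.mul_sub, Matrix.sub_mul, Matrix.mul_assoc]
    simp only [← Matrix.mul_assoc (star U) U, hUU, Matrix.one_mul]
  rw [hcomm, frobNorm_unitary_conj hU, hX, frobNorm_unitary_conj hU]
  exact frobNorm_mul_diagonal_sub_diagonal_mul_le Z μ hR hμ

noncomputable def chebyshevRadius {ι E : Type*} [SeminormedAddCommGroup E] (v : ι → E) : ℝ :=
  ⨅ y, ⨆ i, ‖v i - y‖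

section ChebyshevRadius

variable {ι E : Type*}

theorem chebyshevRadius_nonneg [SeminormedAddCommGroup E] (v : ι → E) : 0 ≤ chebyshevRadius v :=
  Real.iInf_nonneg fun _ => Real.iSup_nonneg fun _ => norm_nonneg _

theorem chebyshevRadius_congr [SeminormedAddCommGroup E] {v w : ι → E}
    (h : Set.range v = Set.range w) : chebyshevRadius v = chebyshevRadius w := by
  refine iInf_congr fun y => ?_
  change sSup (Set.range ((‖· - y‖) ∘ v)) = sSup (Set.range ((‖· - y‖) ∘ w))
  rw [Set.range_comp, Set.range_comp, h]

theorem norm_sub_le_two_mul_chebyshevRadius [Finite ι] [SeminormedAddCommGroup E] (v : ι → E)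
    (i j : ι) : ‖v i - v j‖ ≤ 2 * chebyshevRadius v := by
  rw [chebyshevRadius, Real.mul_iInf_of_nonneg zero_le_two]
  refine le_ciInf fun y => ?_
  have hbdd : BddAbove (Set.range fun k => ‖v k - y‖) := (Set.finite_range _).bddAbove
  calc ‖v i - v j‖ ≤ ‖v i - y‖ + ‖y - v j‖ := norm_sub_le_norm_sub_add_norm_sub _ _ _
    _ = ‖v i - y‖ + ‖v j - y‖ := by rw [norm_sub_rev y]
    _ ≤ 2 * ⨆ k, ‖v k - y‖ := by linarith [le_ciSup hbdd i, le_ciSup hbdd j]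

theorem chebyshevRadius_le [Nonempty ι] [SeminormedAddCommGroup E] {v : ι → E} (c : E) {R : ℝ}
    (h : ∀ i, ‖v i - c‖ ≤ R) : chebyshevRadius v ≤ R := by
  have hbdd : BddBelow (Set.range fun y => ⨆ i, ‖v i - y‖) :=
    ⟨0, Set.forall_mem_range.mpr fun _ => Real.iSup_nonneg fun _ => norm_nonneg _⟩
  exact (ciInf_le hbdd c).trans (ciSup_le h)

theorem two_mul_chebyshevRadius_le_add [NormedAddCommGroup E] [NormedSpace ℝ E] {v : ι → E}
    (a : ι) {s : ℝ} (hs₀ : 0 ≤ s) (hs : s ≤ ‖v a‖) (hv : ∀ k ≠ a, ‖v k‖ ≤ s) :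
    2 * chebyshevRadius v ≤ ‖v a‖ + s := by
  have : Nonempty ι := ⟨a⟩
  set σ := ‖v a‖
  rcases (norm_nonneg _ : 0 ≤ σ).eq_or_lt with hσ | hσ
  · have : chebyshevRadius v ≤ 0 := chebyshevRadius_le 0 fun k => by
      rw [sub_zero]
      by_cases hk : k = a
      · rw [hk, ← hσ]
      · linarith [hv k hk]
    linarith
  set t := (σ - s) / 2 with ht
  set c := (t / σ) • v a
  have hc : ‖c‖ = t := by
    rw [norm_smul, Real.norm_of_nonneg (by positivity), div_mul_cancel₀ _ hσ.ne']
  suffices chebyshevRadius v ≤ (σ + s) / 2 by linarith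
  refine chebyshevRadius_le c fun k => ?_
  by_cases hk : k = a
  · have htσ : t / σ ≤ 1 := (div_le_one hσ).mpr (by linarith)
    rw [hk, show v a - c = (1 - t / σ) • v a by rw [sub_smul, one_smul], norm_smul,
      Real.norm_of_nonneg (by linarith), sub_mul, div_mul_cancel₀ _ hσ.ne']
    linarith
  · calc ‖v k - c‖ ≤ ‖v k‖ + ‖c‖ := norm_sub_le _ _
      _ ≤ s + t := by linarith [hv k hk]
      _ = (σ + s) / 2 := by ring

end ChebyshevRadius

section SortedDesc

variable {d : ℕ}

theorem sortedDesc_antitone (v : Fin d → ℝ) : Antitone (sortedDesc v) :=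
  fun _ _ hkl => Tuple.monotone_sort v (Fin.rev_le_rev.mpr hkl)

theorem sortedDesc_congr {v w : Fin d → ℝ}
    (h : Finset.univ.val.map v = Finset.univ.val.map w) : sortedDesc v = sortedDesc w := by
  have hvw : (List.ofFn v).Perm (List.ofFn w) := by
    simpa only [Fin.univ_val_map, Multiset.coe_eq_coe] using h
  have hsort : v ∘ Tuple.sort v = w ∘ Tuple.sort w :=
    List.ofFn_injective <| List.Perm.eq_of_sortedLE (Tuple.monotone_sort v).sortedLE_ofFn
      (Tuple.monotone_sort w).sortedLE_ofFn <|
        ((Tuple.sort v).ofFn_comp_perm v).trans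
          (hvw.trans ((Tuple.sort w).ofFn_comp_perm w).symm)
  exact funext fun k => congrFun hsort k.rev

theorem le_sortedDesc_one (hd : 2 ≤ d) (v : Fin d → ℝ) {k : Fin d}
    (hk : k ≠ Tuple.sort v (Fin.rev ⟨0, two_pos.trans_le hd⟩)) :
    v k ≤ sortedDesc v ⟨1, one_lt_two.trans_le hd⟩ := by
  obtain ⟨j, rfl⟩ := (Tuple.sort v).surjective k
  have hj : (j : ℕ) ≠ d - 1 := fun h => hk (congrArg _ (Fin.ext (by simp [h])))
  exact Tuple.monotone_sort v (Fin.le_def.mpr (by simp only [Fin.val_rev]; omega))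

end SortedDesc

theorem two_mul_chebyshevRadius_le_sortedDesc {d : ℕ} (hd : 2 ≤ d) {E : Type*}
    [NormedAddCommGroup E] [NormedSpace ℝ E] (v : Fin d → E) :
    2 * chebyshevRadius v ≤
      sortedDesc (‖v ·‖) ⟨0, two_pos.trans_le hd⟩ +
        sortedDesc (‖v ·‖) ⟨1, one_lt_two.trans_le hd⟩ :=
  two_mul_chebyshevRadius_le_add _ (norm_nonneg _)
    (sortedDesc_antitone _ (Fin.mk_le_mk.mpr zero_le_one))
    fun _ hk => le_sortedDesc_one hd _ hk

theorem sum_le_card_rpow_mul_sum_rpow {ι : Type*} [Fintype ι] {f : ι → ℝ} (hf : ∀ i, 0 ≤ f i)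
    (t : Finset ι) {p : ℝ} (hp : 1 ≤ p) :
    ∑ i ∈ t, f i ≤ (t.card : ℝ) ^ (1 - 1 / p) * (∑ i, f i ^ p) ^ (1 / p) := by
  have hS : 0 ≤ ∑ i, f i ^ p := Finset.sum_nonneg fun i _ => Real.rpow_nonneg (hf i) p
  have hpow : (∑ i ∈ t, f i) ^ p ≤ (t.card : ℝ) ^ (p - 1) * ∑ i, f i ^ p :=
    (Real.rpow_sum_le_const_mul_sum_rpow_of_nonneg t hp fun i _ => hf i).trans <|
      mul_le_mul_of_nonneg_left
        (Finset.sum_le_sum_of_subset_of_nonneg t.subset_univ fun i _ _ =>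
          Real.rpow_nonneg (hf i) p)
        (by positivity)
  calc ∑ i ∈ t, f i ≤ ((t.card : ℝ) ^ (p - 1) * ∑ i, f i ^ p) ^ p⁻¹ :=
        (Real.le_rpow_inv_iff_of_pos (Finset.sum_nonneg fun i _ => hf i) (by positivity)
          (by linarith)).mpr hpow
    _ = (t.card : ℝ) ^ (1 - 1 / p) * (∑ i, f i ^ p) ^ (1 / p) := by
        rw [Real.mul_rpow (by positivity) hS, ← Real.rpow_mul (Nat.cast_nonneg _)]
        congr 2 <;> field_simp

theorem add_le_two_rpow_mul_sum_rpow {ι : Type*} [Fintype ι] {f : ι → ℝ} (hf : ∀ i, 0 ≤ f i)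
    {i j : ι} (hij : i ≠ j) {p : ℝ} (hp : 1 ≤ p) :
    f i + f j ≤ 2 ^ (1 - 1 / p) * (∑ k, f k ^ p) ^ (1 / p) := by
  classical
  simpa [Finset.sum_pair hij, Finset.card_pair hij] using
    sum_le_card_rpow_mul_sum_rpow hf {i, j} hp

theorem singularValues_unitary_conj_diagonal {d : ℕ} {U : Matrix (Fin d) (Fin d) ℂ}
    (hU : U ∈ unitaryGroup (Fin d) ℂ) (μ : Fin d → ℂ) :
    singularValues (U * diagonal μ * star U) = sortedDesc (‖μ ·‖) := by
  set Y := U * diagonal μ * star U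
  have hYY : Yᴴ * Y = U * diagonal (fun i => ((‖μ i‖ ^ 2 : ℝ) : ℂ)) * star U := by
    simp only [Y, star_eq_conjTranspose, conjTranspose_mul, conjTranspose_conjTranspose,
      diagonal_conjTranspose, Matrix.mul_assoc]
    rw [← Matrix.mul_assoc Uᴴ U, ← star_eq_conjTranspose, mem_unitaryGroup_iff'.mp hU,
      Matrix.one_mul, ← Matrix.mul_assoc (diagonal _), diagonal_mul_diagonal]
    congr 3
    ext i
    simp [Complex.conj_mul']
  have hev := (Matrix.isHermitian_conjTranspose_mul_self Y).charpoly_eq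
  rw [(congrArg charpoly hYY).trans (charpoly_unitary_conj hU _), charpoly_diagonal] at hev
  have hmap := congrArg (Multiset.map fun z : ℂ => √z.re) (map_univ_eq_of_prod_X_sub_C_eq hev)
  simp only [Multiset.map_map, Function.comp_def, Complex.ofReal_re,
    Real.sqrt_sq (norm_nonneg _)] at hmap
  exact (sortedDesc_congr hmap).symm

/-- For `Y` normal with eigenvalues `λ i` and any `X`, and `p ≥ 1`,
`‖XY - YX‖₂ ≤ 2‖X‖₂ r(Y) ≤ ‖X‖₂ (σ₁(Y) + σ₂(Y)) ≤ 2^(1-1/p) ‖X‖₂ ‖Y‖_p`,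
where `r(Y)` is the radius of the spectrum of `Y`. -/
theorem commutator_bound_normal (d : ℕ) (hd : 2 ≤ d)
    (X Y : Matrix (Fin d) (Fin d) ℂ) (hY : Yᴴ * Y = Y * Yᴴ)
    (lam : Fin d → ℂ)
    (hlam : Y.charpoly = ∏ i, (Polynomial.X - Polynomial.C (lam i)))
    (p : ℝ) (hp : 1 ≤ p) :
    frobNorm (X * Y - Y * X) ≤ 2 * frobNorm X * (⨅ y : ℂ, ⨆ i, ‖lam i - y‖)
    ∧ 2 * frobNorm X * (⨅ y : ℂ, ⨆ i, ‖lam i - y‖)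
        ≤ frobNorm X * (singularValues Y ⟨0, by omega⟩ + singularValues Y ⟨1, by omega⟩)
    ∧ frobNorm X * (singularValues Y ⟨0, by omega⟩ + singularValues Y ⟨1, by omega⟩)
        ≤ (2 : ℝ) ^ (1 - 1 / p) * frobNorm X * schattenNorm p Y := by
  obtain ⟨μ, U, hU, rfl⟩ := exists_unitary_eq_mul_diagonal_mul_star_of_isStarNormal ⟨hY⟩
  have hμ : Finset.univ.val.map μ = Finset.univ.val.map lam :=
    map_univ_eq_of_prod_X_sub_C_eq <| by
      rw [← charpoly_diagonal, ← charpoly_unitary_conj hU, hlam]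
  have hr : chebyshevRadius μ = chebyshevRadius lam :=
    chebyshevRadius_congr (Set.ext fun z => by simpa using congrArg (z ∈ ·) hμ)
  have hσ : singularValues (U * diagonal μ * star U) = sortedDesc (‖lam ·‖) := by
    rw [singularValues_unitary_conj_diagonal hU]
    refine sortedDesc_congr ?_
    simpa only [Multiset.map_map, Function.comp_def] using congrArg (Multiset.map (‖·‖)) hμ
  have hX : 0 ≤ frobNorm X := Real.sqrt_nonneg _
  refine ⟨?_, ?_, ?_⟩
  · calc _ ≤ 2 * chebyshevRadius μ * frobNorm X :=
          frobNorm_commutator_unitary_conj_diagonal_le X hU μ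
            (mul_nonneg zero_le_two (chebyshevRadius_nonneg μ))
            (norm_sub_le_two_mul_chebyshevRadius μ)
      _ = 2 * frobNorm X * chebyshevRadius lam := by rw [hr]; ring
  · rw [hσ]
    calc 2 * frobNorm X * chebyshevRadius lam = frobNorm X * (2 * chebyshevRadius lam) := by ring
      _ ≤ _ := mul_le_mul_of_nonneg_left (two_mul_chebyshevRadius_le_sortedDesc hd lam) hX
  · have hσ₀ : ∀ k, 0 ≤ singularValues (U * diagonal μ * star U) k := fun k => by
      rw [hσ]
      exact norm_nonneg _
    calc _ ≤ frobNorm X * (2 ^ (1 - 1 / p) * schattenNorm p (U * diagonal μ * star U)) :=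
          mul_le_mul_of_nonneg_left
            (add_le_two_rpow_mul_sum_rpow hσ₀ (by simp [Fin.ext_iff]) hp) hX
      _ = _ := by ring
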